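/- arXiv:2007.00721 — 2 statements merged into one kernel-verified Lean document; each statement's English description precedes it below -/
import Mathlib

section
/- For every n with 2k < n < 4k, writing r = (n − 2k − 1) mod 4: SG(n) = 0 if r ∈ {0,1}, and SG(n) = 1 if r ∈ {2,3}, where SG is the Sprague–Grundy function of the game i-Mark({2},{k}) with k ≡ 1 (mod 4), k > 1. (That is, the SG sequence of the interval Z = [b+1, c_0−1] is (0,0,1,1) repeated (c_0 − b − 2)/4 times followed by 0.) -/
/-- The minimum excludant of a finite set of naturals. -/
noncomputable def mex (s : Finset ℕ) : ℕ := sInf {x : ℕ | x ∉ s}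

/-- Sprague–Grundy function of the game i-Mark({2},{k}):
from a pile of `n ≥ 2` tokens one may subtract `2`,
or replace a positive pile size `n` divisible by `k` by `n / k`. -/
noncomputable def sg (k : ℕ) (hk : 2 ≤ k) (n : ℕ) : ℕ :=
  mex ((if h : 2 ≤ n then {sg k hk (n - 2)} else ∅) ∪
       (if h : 0 < n ∧ k ∣ n then {sg k hk (n / k)} else ∅))
termination_by n
decreasing_by
  · omega
  · exact Nat.div_lt_self h.1 hk

/-- The sequence `c_0 = 4k`, `c_m = k(c_{m−1} + 2)`. -/
def c (k : ℕ) : ℕ → ℕ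
  | 0 => 4 * k
  | m + 1 => k * (c k m + 2)

/-- The sequence `a_0 = k`, `a_m = k(a_{m−1} + 2)`. -/
def a (k : ℕ) : ℕ → ℕ
  | 0 => k
  | m + 1 => k * (a k m + 2)

/-- Closed form for `sg k` on `[0, 4k)`. -/
def F (k n : ℕ) : ℕ :=
  if n = k ∨ n = 2 * k then 2
  else if n % 2 = 0 then (if n % 4 = 2 then 1 else 0)
  else if n < k then (if n % 4 = 3 then 1 else 0)
  else (if n % 4 = 1 then 1 else 0)

lemma mex_eq_of (s : Finset ℕ) (m : ℕ) (h1 : m ∉ s) (h2 : ∀ x < m, x ∈ s) :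
    mex s = m := by
  unfold mex
  refine le_antisymm (Nat.sInf_le h1) ?_
  by_contra h
  push_neg at h
  have hne : {x : ℕ | x ∉ (s : Finset ℕ)}.Nonempty := ⟨m, h1⟩
  have hmem := Nat.sInf_mem hne
  exact hmem (h2 _ h)

set_option maxHeartbeats 1000000 in
lemma sg_eq_F (k : ℕ) (hk : 2 ≤ k) (hk4 : k % 4 = 1) (hk5 : 4 < k) :
    ∀ n, n < 4 * k → sg k hk n = F k n := by
  intro n
  induction n using Nat.strong_induction_on with
  | _ n ih =>
    intro hn
    rw [sg]
    by_cases h2 : 2 ≤ n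
    · rw [dif_pos h2]
      by_cases hd : 0 < n ∧ k ∣ n
      · rw [dif_pos hd]
        obtain ⟨hpos, m, hm⟩ := hd
        have hk0 : 0 < k := by omega
        have hm4 : m < 4 := by
          have h' : k * m < k * 4 := by rw [← hm]; omega
          exact Nat.lt_of_mul_lt_mul_left h'
        have hm1 : 1 ≤ m := by
          rcases Nat.eq_zero_or_pos m with h | h
          · subst h; simp at hm; omega
          · exact h
        have hdiv : n / k = m := by rw [hm, Nat.mul_div_cancel_left m hk0]
        have hmlt : m < 4 * k := by omega
        have hkm : k * 1 ≤ k * m := Nat.mul_le_mul_left k hm1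
        have hmn : m < n := by omega
        rw [hdiv, ih (n - 2) (by omega) (by omega), ih m hmn hmlt]
        interval_cases m
        · -- n = k
          have hF1 : F k 1 = 0 := by simp only [F]; split_ifs <;> first | exact absurd trivial ‹_› | exact ‹False›.elim | omega
          have hF2 : F k (n - 2) = 1 := by simp only [F]; split_ifs <;> first | exact absurd trivial ‹_› | exact ‹False›.elim | omega
          have hFn : F k n = 2 := by simp only [F]; split_ifs <;> first | exact absurd trivial ‹_› | exact ‹False›.elim | omega
          rw [hF1, hF2, hFn]
          apply mex_eq_of
          · simp
          · intro x hx
            interval_cases x <;> simp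
        · -- n = 2k
          have hF1 : F k 2 = 1 := by simp only [F]; split_ifs <;> first | exact absurd trivial ‹_› | exact ‹False›.elim | omega
          have hF2 : F k (n - 2) = 0 := by simp only [F]; split_ifs <;> first | exact absurd trivial ‹_› | exact ‹False›.elim | omega
          have hFn : F k n = 2 := by simp only [F]; split_ifs <;> first | exact absurd trivial ‹_› | exact ‹False›.elim | omega
          rw [hF1, hF2, hFn]
          apply mex_eq_of
          · simp
          · intro x hx
            interval_cases x <;> simp
        · -- n = 3k
          have hF1 : F k 3 = 1 := by simp only [F]; split_ifs <;> first | exact absurd trivial ‹_› | exact ‹False›.elim | omega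
          have hF2 : F k (n - 2) = 1 := by simp only [F]; split_ifs <;> first | exact absurd trivial ‹_› | exact ‹False›.elim | omega
          have hFn : F k n = 0 := by simp only [F]; split_ifs <;> first | exact absurd trivial ‹_› | exact ‹False›.elim | omega
          rw [hF1, hF2, hFn]
          apply mex_eq_of
          · simp
          · intro x hx; omega
      · rw [dif_neg hd, Finset.union_empty, ih (n - 2) (by omega) (by omega)]
        have hne1 : n ≠ k := fun h => hd ⟨by omega, by simp [h]⟩
        have hne2 : n ≠ 2 * k := fun h => hd ⟨by omega, by simp [h]⟩
        have hne3 : n ≠ 3 * k := fun h => hd ⟨by omega, by simp [h]⟩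
        by_cases h0 : F k (n - 2) = 0
        · rw [h0]
          have : F k n = 1 := by
            simp only [F] at h0 ⊢
            split_ifs at h0 ⊢ <;> first | exact absurd trivial ‹_› | exact ‹False›.elim | omega
          rw [this]
          apply mex_eq_of
          · simp
          · intro x hx
            interval_cases x <;> simp
        · have : F k n = 0 := by
            simp only [F] at h0 ⊢
            split_ifs at h0 ⊢ <;> first | exact absurd trivial ‹_› | exact ‹False›.elim | omega
          rw [this]
          apply mex_eq_of
          · simp [h0]; omega
          · intro x hx; omega
    · rw [dif_neg h2]
      have hd : ¬ (0 < n ∧ k ∣ n) := by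
        rintro ⟨hpos, hdvd⟩
        have := Nat.le_of_dvd hpos hdvd
        omega
      rw [dif_neg hd, Finset.union_empty]
      have : F k n = 0 := by simp only [F]; split_ifs <;> first | exact absurd trivial ‹_› | exact ‹False›.elim | omega
      rw [this]
      apply mex_eq_of
      · simp
      · intro x hx; omega

theorem sg_Z (k : ℕ) (hk : k % 4 = 1) (hk1 : 1 < k) (n : ℕ)
    (h1 : 2 * k < n) (h2 : n < 4 * k) (r : ℕ) (hr : r = (n - 2 * k - 1) % 4) :
    (r = 0 ∨ r = 1 → sg k (by omega) n = 0) ∧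
    (r = 2 ∨ r = 3 → sg k (by omega) n = 1) := by
  have key : ∀ (h : 2 ≤ k), sg k h n = F k n := fun h =>
    sg_eq_F k h hk (by omega) n h2
  simp only [key]
  simp only [F]
  constructor <;> intro hcase <;> split_ifs <;> first | exact absurd trivial ‹_› | exact ‹False›.elim | omega
end

section
/- For every m ≥ 1 and every n with c_{m−1} < n < a_m, writing r = (n − c_{m−1} − 1) mod 4: SG(n) = 1 if r ∈ {0,3}, and SG(n) = 0 if r ∈ {1,2}, where SG is the Sprague–Grundy function of the game i-Mark({2},{k}) with k ≡ 1 (mod 4), k > 1. (That is, the SG sequence of the interval A_m = [c_{m−1}+1, a_m−1] is (1,0,0,1) repeated (a_m − c_{m−1} − 3)/4 times followed by 1,0.) -/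
lemma mex_eq_of_s13 (s : Finset ℕ) (v : ℕ) (hv : v ∉ s) (h : ∀ w < v, w ∈ s) : mex s = v := by
  have h1 : mex s ≤ v := Nat.sInf_le hv
  have h2 : v ≤ mex s := by
    apply le_csInf ⟨v, hv⟩
    intro w hw
    by_contra hlt
    push_neg at hlt
    exact hw (h w hlt)
  omega

lemma sg_zero (k : ℕ) (hk : 2 ≤ k) : sg k hk 0 = 0 := by
  rw [sg]
  simp only [show ¬(2 ≤ 0) by omega, show ¬(0 < 0 ∧ k ∣ 0) by omega, dif_neg, not_false_iff]
  simp only [Finset.union_empty]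
  exact mex_eq_of_s13 _ 0 (by simp) (by omega)

lemma sg_one (k : ℕ) (hk : 2 ≤ k) : sg k hk 1 = 0 := by
  rw [sg]
  have h2 : ¬ (0 < 1 ∧ k ∣ 1) := by
    rintro ⟨-, hd⟩; have := Nat.le_of_dvd one_pos hd; omega
  rw [dif_neg (by omega), dif_neg h2]
  simp only [Finset.union_empty, Finset.empty_union]
  exact mex_eq_of_s13 _ 0 (by simp) (by omega)

lemma sg_rec_nd (k : ℕ) (hk : 2 ≤ k) (n : ℕ) (hn : 2 ≤ n) (hd : ¬ k ∣ n) :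
    sg k hk n = mex {sg k hk (n - 2)} := by
  rw [sg, dif_pos hn, dif_neg (by tauto), Finset.union_empty]

lemma sg_rec_d (k : ℕ) (hk : 2 ≤ k) (n : ℕ) (hn : 2 ≤ n) (hd : k ∣ n) :
    sg k hk n = mex {sg k hk (n - 2), sg k hk (n / k)} := by
  rw [sg, dif_pos hn, dif_pos ⟨by omega, hd⟩, show ({sg k hk (n-2)} ∪ {sg k hk (n/k)} : Finset ℕ) = {sg k hk (n-2), sg k hk (n/k)} from rfl]
def pat1001 (o : ℕ) : ℕ := if o % 4 = 0 ∨ o % 4 = 3 then 1 else 0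
def pat0011 (o : ℕ) : ℕ := if o % 4 = 2 ∨ o % 4 = 3 then 1 else 0

lemma pat1001_mod (o : ℕ) : pat1001 (o % 4) = pat1001 o := by
  simp [pat1001, Nat.mod_mod_of_dvd]
lemma pat0011_mod (o : ℕ) : pat0011 (o % 4) = pat0011 o := by
  simp [pat0011, Nat.mod_mod_of_dvd]
lemma pat1001_le (o : ℕ) : pat1001 o ≤ 1 := by unfold pat1001; split <;> omega
lemma pat0011_le (o : ℕ) : pat0011 o ≤ 1 := by unfold pat0011; split <;> omega
lemma pat1001_flip (o : ℕ) : pat1001 (o + 2) = 1 - pat1001 o := by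
  have h : o % 4 = 0 ∨ o % 4 = 1 ∨ o % 4 = 2 ∨ o % 4 = 3 := by omega
  have h2 : (o + 2) % 4 = (o % 4 + 2) % 4 := by omega
  rcases h with h | h | h | h <;> simp [pat1001, h2, h]
lemma pat0011_flip (o : ℕ) : pat0011 (o + 2) = 1 - pat0011 o := by
  have h : o % 4 = 0 ∨ o % 4 = 1 ∨ o % 4 = 2 ∨ o % 4 = 3 := by omega
  have h2 : (o + 2) % 4 = (o % 4 + 2) % 4 := by omega
  rcases h with h | h | h | h <;> simp [pat0011, h2, h]
lemma pat1001_one : pat1001 1 = 0 := by simp [pat1001]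
lemma pat0011_one : pat0011 1 = 0 := by simp [pat0011]
lemma mex_compute1 (p x : ℕ) (hp : p ≤ 1) (hx : (x = 2 ∧ p = 0) ∨ x = 1 - p) :
    mex {x} = p := by
  interval_cases p <;> rcases hx with ⟨rfl, h⟩ | rfl <;>
    first
    | omega
    | · apply mex_eq_of_s13 <;> intros <;> simp_all <;> omega

lemma mex_compute2 (p x y : ℕ) (hp : p ≤ 1) (hx : (x = 2 ∧ p = 0) ∨ x = 1 - p)
    (hy : y = 2 ∨ y = 1 - p) : mex {x, y} = p := by
  interval_cases p <;> rcases hx with ⟨rfl, h⟩ | rfl <;> rcases hy with rfl | rfl <;>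
    first
    | omega
    | · apply mex_eq_of_s13 <;> intros <;> simp_all <;> omega

lemma mex_10 : mex {1, 0} = 2 := by
  apply mex_eq_of_s13 <;> intros <;> simp_all <;> omega

lemma interval_pat (k : ℕ) (hk : 2 ≤ k) (pat : ℕ → ℕ)
    (hp1 : ∀ o, pat o ≤ 1) (hflip : ∀ o, pat (o + 2) = 1 - pat o) (hq1 : pat 1 = 0)
    (s e : ℕ) (h2 : 2 ≤ s)
    (hS : sg k hk s = 2) (hL : sg k hk (s - 1) = 1 - pat 0)
    (hdiv : ∀ n, s < n → n < e → k ∣ n → sg k hk (n / k) = 2 ∨ sg k hk (n / k) = 1 - pat (n - s - 1)) :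
    ∀ n, s < n → n < e → sg k hk n = pat (n - s - 1) := by
  intro n
  induction n using Nat.strong_induction_on with
  | _ n ih =>
    intro hsn hne
    -- value of sg (n-2)
    have hx : (sg k hk (n - 2) = 2 ∧ pat (n - s - 1) = 0) ∨ sg k hk (n - 2) = 1 - pat (n - s - 1) := by
      rcases Nat.lt_or_ge n (s + 3) with hn3 | hn3
      · rcases Nat.lt_or_ge n (s + 2) with hn2 | hn2
        · -- n = s + 1
          have hn : n = s + 1 := by omega
          right
          have : n - 2 = s - 1 := by omega
          rw [this, hL]
          have : n - s - 1 = 0 := by omega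
          rw [this]
        · -- n = s + 2
          have hn : n = s + 2 := by omega
          left
          have h1 : n - 2 = s := by omega
          have h0 : n - s - 1 = 1 := by omega
          rw [h1, h0, hS]
          exact ⟨rfl, hq1⟩
      · -- n ≥ s + 3
        right
        have hrec := ih (n - 2) (by omega) (by omega) (by omega)
        have ho : n - s - 1 = (n - 2 - s - 1) + 2 := by omega
        rw [hrec, ho, hflip]
        have := hp1 (n - 2 - s - 1)
        omega
    have hple := hp1 (n - s - 1)
    by_cases hd : k ∣ n
    · rw [sg_rec_d k hk n (by omega) hd]
      refine mex_compute2 _ _ _ hple ?_ (hdiv n hsn hne hd)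
      tauto
    · rw [sg_rec_nd k hk n (by omega) hd]
      refine mex_compute1 _ _ hple ?_
      tauto

lemma mul_mod4 (k x : ℕ) (hk4 : k % 4 = 1) : (k * x) % 4 = x % 4 := by
  rw [Nat.mul_mod, hk4, one_mul, Nat.mod_mod_of_dvd _ (dvd_refl 4)]

lemma a_mod (k : ℕ) (hk4 : k % 4 = 1) : ∀ m, a k m % 4 = (2 * m + 1) % 4 := by
  intro m
  induction m with
  | zero => simpa [a] using hk4
  | succ m ih =>
    rw [a, mul_mod4 k _ hk4, Nat.add_mod, ih]
    omega

lemma c_mod (k : ℕ) (hk4 : k % 4 = 1) : ∀ m, c k m % 4 = (2 * m) % 4 := by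
  intro m
  induction m with
  | zero => rw [c]; omega
  | succ m ih =>
    rw [c, mul_mod4 k _ hk4, Nat.add_mod, ih]
    omega

lemma a_lt_c (k : ℕ) (hk5 : 5 ≤ k) : ∀ m, a k m < c k m := by
  intro m
  induction m with
  | zero => rw [a, c]; omega
  | succ m ih =>
    rw [a, c]
    have : a k m + 2 < c k m + 2 := by omega
    exact (Nat.mul_lt_mul_left (by omega : 0 < k)).mpr this

lemma c_lt_a (k : ℕ) (hk5 : 5 ≤ k) : ∀ m, c k m < a k (m + 1) := by
  intro m
  induction m with
  | zero =>
    rw [c, a, a]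
    nlinarith
  | succ m ih =>
    rw [c, a]
    have h2 : a k (m + 1) = k * (a k m + 2) := by rw [a]
    have : c k m + 2 < a k (m + 1) + 2 := by omega
    exact (Nat.mul_lt_mul_left (by omega : 0 < k)).mpr this

lemma c_ge (k : ℕ) (hk5 : 5 ≤ k) (m : ℕ) : 4 * k ≤ c k m := by
  induction m with
  | zero => rw [c]
  | succ m ih => rw [c]; nlinarith

lemma a_ge (k : ℕ) (hk5 : 5 ≤ k) (m : ℕ) : k ≤ a k m := by
  induction m with
  | zero => rw [a]
  | succ m ih => rw [a]; nlinarith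

lemma off_mod (k : ℕ) (hk4 : k % 4 = 1) (d : ℕ) (hd : 1 ≤ d) :
    (k * d - 1) % 4 = (d - 1) % 4 := by
  obtain ⟨t, ht⟩ : ∃ t, k = 4 * t + 1 := ⟨k / 4, by omega⟩
  subst ht
  have e : (4 * t + 1) * d = (t * d) * 4 + d := by ring
  rw [e]
  generalize t * d = u
  omega

lemma sg_base (k : ℕ) (hk : 2 ≤ k) : ∀ n, n < k → sg k hk n = pat0011 n := by
  intro n
  induction n using Nat.strong_induction_on with
  | _ n ih =>
    intro hn
    rcases Nat.lt_or_ge n 2 with h2 | h2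
    · interval_cases n
      · rw [sg_zero]; simp [pat0011]
      · rw [sg_one]; simp [pat0011]
    · have hd : ¬ k ∣ n := fun hd => by have := Nat.le_of_dvd (by omega) hd; omega
      rw [sg_rec_nd k hk n h2 hd, ih (n - 2) (by omega) (by omega)]
      apply mex_compute1 _ _ (pat0011_le n)
      right
      have ho : n = (n - 2) + 2 := by omega
      conv_rhs => rw [ho, pat0011_flip]
      have := pat0011_le (n - 2)
      omega

lemma sg_a0 (k : ℕ) (hk : 2 ≤ k) (hk4 : k % 4 = 1) (hk5 : 5 ≤ k) : sg k hk k = 2 := by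
  rw [sg_rec_d k hk k hk (dvd_refl k), Nat.div_self (by omega), sg_one,
    sg_base k hk (k - 2) (by omega)]
  have h1 : pat0011 (k - 2) = 1 := by
    have h : (k - 2) % 4 = 3 := by omega
    simp [pat0011, h]
  rw [h1]
  exact mex_10

lemma sg_I1 (k : ℕ) (hk : 2 ≤ k) (hk4 : k % 4 = 1) (hk5 : 5 ≤ k) :
    ∀ n, k < n → n < 2 * k → sg k hk n = pat1001 (n - k - 1) := by
  apply interval_pat k hk pat1001 pat1001_le pat1001_flip pat1001_one _ _ (by omega)
    (sg_a0 k hk hk4 hk5)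
  · rw [sg_base k hk (k - 1) (by omega)]
    have h : (k - 1) % 4 = 0 := by omega
    simp [pat0011, pat1001, h]
  · rintro n hn1 hn2 ⟨j, rfl⟩
    have hj1 : 1 < j := by
      by_contra h
      push_neg at h
      have : k * j ≤ k * 1 := Nat.mul_le_mul_left k h
      omega
    have hj2 : j < 2 := by
      by_contra h
      push_neg at h
      have : k * 2 ≤ k * j := Nat.mul_le_mul_left k h
      omega
    omega

lemma sg_b (k : ℕ) (hk : 2 ≤ k) (hk4 : k % 4 = 1) (hk5 : 5 ≤ k) : sg k hk (2 * k) = 2 := by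
  have hdvd : k ∣ 2 * k := ⟨2, by ring⟩
  rw [sg_rec_d k hk (2 * k) (by omega) hdvd,
    show 2 * k / k = 2 by rw [mul_comm, Nat.mul_div_cancel_left 2 (by omega)],
    sg_base k hk 2 (by omega), sg_I1 k hk hk4 hk5 (2 * k - 2) (by omega) (by omega)]
  have h1 : pat1001 (2 * k - 2 - k - 1) = 0 := by
    have h : (2 * k - 2 - k - 1) % 4 = 2 := by omega
    simp [pat1001, h]
  have h2 : pat0011 2 = 1 := by simp [pat0011]
  rw [h1, h2]
  apply mex_eq_of_s13 <;> intros <;> simp_all <;> omega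

lemma sg_I2 (k : ℕ) (hk : 2 ≤ k) (hk4 : k % 4 = 1) (hk5 : 5 ≤ k) :
    ∀ n, 2 * k < n → n < 4 * k → sg k hk n = pat0011 (n - 2 * k - 1) := by
  apply interval_pat k hk pat0011 pat0011_le pat0011_flip pat0011_one _ _ (by omega)
    (sg_b k hk hk4 hk5)
  · rw [sg_I1 k hk hk4 hk5 (2 * k - 1) (by omega) (by omega)]
    have h : (2 * k - 1 - k - 1) % 4 = 3 := by omega
    simp [pat1001, pat0011, h]
  · rintro n hn1 hn2 ⟨j, rfl⟩
    have hj1 : 2 < j := by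
      by_contra h
      push_neg at h
      have : k * j ≤ k * 2 := Nat.mul_le_mul_left k h
      omega
    have hj2 : j < 4 := by
      by_contra h
      push_neg at h
      have : k * 4 ≤ k * j := Nat.mul_le_mul_left k h
      omega
    have hj : j = 3 := by omega
    subst hj
    right
    rw [Nat.mul_div_cancel_left 3 (by omega), sg_base k hk 3 (by omega)]
    have h1 : pat0011 3 = 1 := by simp [pat0011]
    have h2 : (k * 3 - 2 * k - 1) % 4 = 0 := by omega
    rw [h1, ← pat0011_mod, h2]
    simp [pat0011]

lemma sg_c0 (k : ℕ) (hk : 2 ≤ k) (hk4 : k % 4 = 1) (hk5 : 5 ≤ k) : sg k hk (4 * k) = 2 := by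
  have hdvd : k ∣ 4 * k := ⟨4, by ring⟩
  rw [sg_rec_d k hk (4 * k) (by omega) hdvd,
    show 4 * k / k = 4 by rw [mul_comm, Nat.mul_div_cancel_left 4 (by omega)],
    sg_base k hk 4 (by omega), sg_I2 k hk hk4 hk5 (4 * k - 2) (by omega) (by omega)]
  have h1 : pat0011 (4 * k - 2 - 2 * k - 1) = 1 := by
    have h : (4 * k - 2 - 2 * k - 1) % 4 = 3 := by omega
    simp [pat0011, h]
  have h2 : pat0011 4 = 0 := by simp [pat0011]
  rw [h1, h2]
  exact mex_10

lemma offset_mod (k : ℕ) (hk4 : k % 4 = 1) (hk : 2 ≤ k) (t j : ℕ) (hj : t + 2 < j) :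
    (k * j - k * (t + 2) - 1) % 4 = (j - t - 3) % 4 := by
  have e : k * j = k * (j - (t + 2)) + k * (t + 2) := by
    have h : j = (j - (t + 2)) + (t + 2) := by omega
    calc k * j = k * ((j - (t + 2)) + (t + 2)) := by rw [← h]
    _ = k * (j - (t + 2)) + k * (t + 2) := by ring
  set d := j - (t + 2) with hd
  have h1 : k * j - k * (t + 2) - 1 = k * d - 1 := by omega
  rw [h1, off_mod k hk4 d (by omega)]
  omega

lemma offset_flip (k : ℕ) (hk4 : k % 4 = 1) (hk : 2 ≤ k) (t j : ℕ) (hj : t + 2 < j) :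
    pat1001 (j - t - 1) = 1 - pat1001 (k * j - k * (t + 2) - 1) := by
  rw [← pat1001_mod (k * j - k * (t + 2) - 1), offset_mod k hk4 hk t j hj, pat1001_mod]
  have h2 : j - t - 1 = (j - t - 3) + 2 := by omega
  rw [h2, pat1001_flip]

lemma main_ind (k : ℕ) (hk : 2 ≤ k) (hk4 : k % 4 = 1) (hk5 : 5 ≤ k) : ∀ m : ℕ,
    (∀ n, c k m < n → n < a k (m + 1) → sg k hk n = pat1001 (n - c k m - 1)) ∧
    sg k hk (a k (m + 1)) = 2 ∧
    (∀ n, a k (m + 1) < n → n < c k (m + 1) → sg k hk n = pat1001 (n - a k (m + 1) - 1)) ∧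
    sg k hk (c k (m + 1)) = 2 := by
  have hkpos : 0 < k := by omega
  intro m
  induction m with
  | zero =>
    have hc0 : c k 0 = 4 * k := by rw [c]
    have ha1 : a k 1 = k * (k + 2) := by rw [a, a]
    have hc1 : c k 1 = k * (4 * k + 2) := by rw [c, c]
    have ha1big : 4 * k + 3 < a k 1 := by rw [ha1]; nlinarith
    have hc1big : a k 1 + 3 < c k 1 := by rw [ha1, hc1]; nlinarith
    -- A0
    have hA : ∀ n, c k 0 < n → n < a k 1 → sg k hk n = pat1001 (n - c k 0 - 1) := by
      rw [hc0]
      apply interval_pat k hk pat1001 pat1001_le pat1001_flip pat1001_one _ _ (by omega)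
        (sg_c0 k hk hk4 hk5)
      · rw [sg_I2 k hk hk4 hk5 (4 * k - 1) (by omega) (by omega)]
        have h : (4 * k - 1 - 2 * k - 1) % 4 = 0 := by omega
        simp [pat0011, pat1001, ← pat0011_mod (4 * k - 1 - 2 * k - 1), h]
      · rintro n hn1 hn2 ⟨j, rfl⟩
        rw [Nat.mul_div_cancel_left j hkpos]
        rw [ha1] at hn2
        have hj1 : 4 < j := by
          have : k * 4 < k * j := by omega
          exact Nat.lt_of_mul_lt_mul_left this
        have hj2 : j < k + 2 := Nat.lt_of_mul_lt_mul_left hn2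
        have hoff : (k * j - 4 * k - 1) % 4 = (j - 2 - 3) % 4 := by
          have := offset_mod k hk4 hk 2 j (by omega)
          have e : k * (2 + 2) = 4 * k := by ring
          rw [e] at this
          exact this
        rcases Nat.lt_or_ge j k with hjk | hjk
        · right
          rw [sg_base k hk j hjk, ← pat1001_mod (k * j - 4 * k - 1), hoff]
          have h4 : j % 4 = 0 ∨ j % 4 = 1 ∨ j % 4 = 2 ∨ j % 4 = 3 := by omega
          rw [← pat0011_mod j]
          rcases h4 with h | h | h | h <;>
            · have h5 : (j - 2 - 3) % 4 = (j % 4 + 3) % 4 := by omega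
              rw [h5, h]
              simp [pat0011, pat1001]
        · rcases Nat.lt_or_ge j (k + 1) with hj3 | hj3
          · left
            have hjj : j = k := by omega
            rw [hjj]
            exact sg_a0 k hk hk4 hk5
          · right
            have hjk1 : j = k + 1 := by omega
            subst hjk1
            rw [sg_I1 k hk hk4 hk5 (k + 1) (by omega) (by omega),
              ← pat1001_mod (k * (k + 1) - 4 * k - 1), hoff]
            have h5 : (k + 1 - 2 - 3) % 4 = 1 := by omega
            have h6 : (k + 1 - k - 1) = 0 := by omega
            rw [h5, h6]
            simp [pat1001]
    have hB : sg k hk (a k 1) = 2 := by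
      have hdvd : k ∣ a k 1 := ⟨k + 2, ha1⟩
      rw [sg_rec_d k hk (a k 1) (by omega) hdvd,
        show a k 1 / k = k + 2 by rw [ha1, Nat.mul_div_cancel_left _ hkpos],
        sg_I1 k hk hk4 hk5 (k + 2) (by omega) (by omega),
        show k + 2 - k - 1 = 1 by omega, pat1001_one,
        hA (a k 1 - 2) (by omega) (by omega)]
      have hmod : (a k 1 - 2 - c k 0 - 1) % 4 = 0 := by
        have h1 : a k 1 % 4 = 3 := by have := a_mod k hk4 1; omega
        rw [hc0]
        omega
      rw [← pat1001_mod (a k 1 - 2 - c k 0 - 1), hmod]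
      simp only [pat1001]
      norm_num
      exact mex_10
    have hC : ∀ n, a k 1 < n → n < c k 1 → sg k hk n = pat1001 (n - a k 1 - 1) := by
      apply interval_pat k hk pat1001 pat1001_le pat1001_flip pat1001_one (a k 1) (c k 1)
        (by have := a_ge k hk5 1; omega) hB
      · -- hL
        rw [hA (a k 1 - 1) (by omega) (by omega)]
        have hmod : (a k 1 - 1 - c k 0 - 1) % 4 = 1 := by
          have h1 : a k 1 % 4 = 3 := by have := a_mod k hk4 1; omega
          rw [hc0]; omega
        rw [← pat1001_mod (a k 1 - 1 - c k 0 - 1), hmod, pat1001_one]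
        simp [pat1001]
      · -- hdiv
        rintro n hn1 hn2 ⟨j, rfl⟩
        rw [Nat.mul_div_cancel_left j hkpos]
        rw [ha1] at hn1
        rw [hc1] at hn2
        have hj1 : k + 2 < j := Nat.lt_of_mul_lt_mul_left hn1
        have hj2 : j < 4 * k + 2 := Nat.lt_of_mul_lt_mul_left hn2
        have hoff : (k * j - a k 1 - 1) % 4 = (j - k - 3) % 4 := by
          rw [ha1]
          exact offset_mod k hk4 hk k j (by omega)
        rcases Nat.lt_or_ge j (2 * k) with hc1' | hc1'
        · right
          rw [sg_I1 k hk hk4 hk5 j (by omega) hc1', ← pat1001_mod (k * j - a k 1 - 1), hoff,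
            pat1001_mod]
          have h2 : j - k - 1 = (j - k - 3) + 2 := by omega
          rw [h2, pat1001_flip]
        · rcases Nat.lt_or_ge j (2 * k + 1) with hj3 | hj3
          · left
            have : j = 2 * k := by omega
            subst this
            exact sg_b k hk hk4 hk5
          · rcases Nat.lt_or_ge j (4 * k) with hj4 | hj4
            · right
              rw [sg_I2 k hk hk4 hk5 j (by omega) hj4, ← pat1001_mod (k * j - a k 1 - 1), hoff]
              have h4 : (j - 2 * k - 1) % 4 = 0 ∨ (j - 2 * k - 1) % 4 = 1 ∨
                  (j - 2 * k - 1) % 4 = 2 ∨ (j - 2 * k - 1) % 4 = 3 := by omega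
              rw [← pat0011_mod (j - 2 * k - 1)]
              rcases h4 with h | h | h | h <;>
                · have h5 : (j - k - 3) % 4 = ((j - 2 * k - 1) % 4 + 3) % 4 := by omega
                  rw [h5, h]
                  simp [pat0011, pat1001]
            · rcases Nat.lt_or_ge j (4 * k + 1) with hj5 | hj5
              · left
                have : j = 4 * k := by omega
                subst this
                exact sg_c0 k hk hk4 hk5
              · right
                have hj6 : j = 4 * k + 1 := by omega
                subst hj6
                rw [hA (4 * k + 1) (by omega) (by omega), hc0,
                  show 4 * k + 1 - 4 * k - 1 = 0 by omega,
                  ← pat1001_mod (k * (4 * k + 1) - a k 1 - 1), hoff]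
                have h5 : (4 * k + 1 - k - 3) % 4 = 1 := by omega
                rw [h5]
                simp [pat1001]
    have hD : sg k hk (c k 1) = 2 := by
      have hdvd : k ∣ c k 1 := ⟨4 * k + 2, hc1⟩
      rw [sg_rec_d k hk (c k 1) (by omega) hdvd,
        show c k 1 / k = 4 * k + 2 by rw [hc1, Nat.mul_div_cancel_left _ hkpos],
        hA (4 * k + 2) (by omega) (by omega), hc0,
        show 4 * k + 2 - 4 * k - 1 = 1 by omega, pat1001_one,
        hC (c k 1 - 2) (by omega) (by omega)]
      have hmod : (c k 1 - 2 - a k 1 - 1) % 4 = 0 := by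
        have h1 : a k 1 % 4 = 3 := by have := a_mod k hk4 1; omega
        have h2 : c k 1 % 4 = 2 := by have := c_mod k hk4 1; omega
        omega
      rw [← pat1001_mod (c k 1 - 2 - a k 1 - 1), hmod]
      simp only [pat1001]
      norm_num
      exact mex_10
    exact ⟨hA, hB, hC, hD⟩
  | succ m ih =>
    obtain ⟨ihA, ihB, ihC, ihD⟩ := ih
    have hcs : c k (m + 2) = k * (c k (m + 1) + 2) := by rw [c]
    have has : a k (m + 2) = k * (a k (m + 1) + 2) := by rw [a]
    have hcs' : c k (m + 1) = k * (c k m + 2) := by rw [c]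
    have ma1 := a_mod k hk4 (m + 1)
    have ma2 := a_mod k hk4 (m + 2)
    have mc0 := c_mod k hk4 m
    have mc1 := c_mod k hk4 (m + 1)
    have mc2 := c_mod k hk4 (m + 2)
    have g0 : c k m + 3 ≤ a k (m + 1) := by have := c_lt_a k hk5 m; omega
    have g1 : a k (m + 1) + 3 ≤ c k (m + 1) := by have := a_lt_c k hk5 (m + 1); omega
    have g2 : c k (m + 1) + 3 ≤ a k (m + 2) := by
      have h := c_lt_a k hk5 (m + 1)
      have he : a k (m + 1 + 1) = a k (m + 2) := rfl
      omega
    have g3 : a k (m + 2) + 3 ≤ c k (m + 2) := by have := a_lt_c k hk5 (m + 2); omega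
    have hA : ∀ n, c k (m + 1) < n → n < a k (m + 2) →
        sg k hk n = pat1001 (n - c k (m + 1) - 1) := by
      apply interval_pat k hk pat1001 pat1001_le pat1001_flip pat1001_one
        (c k (m + 1)) (a k (m + 2)) (by have := c_ge k hk5 (m + 1); omega) ihD
      · rw [ihC (c k (m + 1) - 1) (by omega) (by omega)]
        have hmod : (c k (m + 1) - 1 - a k (m + 1) - 1) % 4 = 1 := by omega
        rw [← pat1001_mod (c k (m + 1) - 1 - a k (m + 1) - 1), hmod, pat1001_one]
        simp [pat1001]
      · rintro n hn1 hn2 ⟨j, rfl⟩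
        rw [Nat.mul_div_cancel_left j hkpos]
        rw [hcs'] at hn1
        rw [has] at hn2
        have hj1 : c k m + 2 < j := Nat.lt_of_mul_lt_mul_left hn1
        have hj2 : j < a k (m + 1) + 2 := Nat.lt_of_mul_lt_mul_left hn2
        have hoff : (k * j - c k (m + 1) - 1) % 4 = (j - c k m - 3) % 4 := by
          rw [hcs']
          exact offset_mod k hk4 hk (c k m) j (by omega)
        rcases Nat.lt_or_ge j (a k (m + 1)) with hja | hja
        · right
          rw [ihA j (by omega) hja, hcs']
          exact offset_flip k hk4 hk (c k m) j (by omega)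
        · rcases Nat.lt_or_ge j (a k (m + 1) + 1) with hj3 | hj3
          · left
            have hjj : j = a k (m + 1) := by omega
            rw [hjj]
            exact ihB
          · right
            have hjj : j = a k (m + 1) + 1 := by omega
            subst hjj
            rw [ihC (a k (m + 1) + 1) (by omega) (by omega),
              show a k (m + 1) + 1 - a k (m + 1) - 1 = 0 by omega,
              ← pat1001_mod (k * (a k (m + 1) + 1) - c k (m + 1) - 1), hoff]
            have hmod : (a k (m + 1) + 1 - c k m - 3) % 4 = 1 := by omega
            rw [hmod]
            simp [pat1001]
    have hB : sg k hk (a k (m + 2)) = 2 := by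
      have hdvd : k ∣ a k (m + 2) := ⟨a k (m + 1) + 2, has⟩
      rw [sg_rec_d k hk (a k (m + 2)) (by have := a_ge k hk5 (m + 2); omega) hdvd,
        show a k (m + 2) / k = a k (m + 1) + 2 by
          rw [has, Nat.mul_div_cancel_left _ hkpos],
        ihC (a k (m + 1) + 2) (by omega) (by omega),
        show a k (m + 1) + 2 - a k (m + 1) - 1 = 1 by omega, pat1001_one,
        hA (a k (m + 2) - 2) (by omega) (by omega)]
      have hmod : (a k (m + 2) - 2 - c k (m + 1) - 1) % 4 = 0 := by omega
      rw [← pat1001_mod (a k (m + 2) - 2 - c k (m + 1) - 1), hmod]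
      simp only [pat1001]
      norm_num
      exact mex_10
    have hC : ∀ n, a k (m + 2) < n → n < c k (m + 2) →
        sg k hk n = pat1001 (n - a k (m + 2) - 1) := by
      apply interval_pat k hk pat1001 pat1001_le pat1001_flip pat1001_one
        (a k (m + 2)) (c k (m + 2)) (by have := a_ge k hk5 (m + 2); omega) hB
      · rw [hA (a k (m + 2) - 1) (by omega) (by omega)]
        have hmod : (a k (m + 2) - 1 - c k (m + 1) - 1) % 4 = 1 := by omega
        rw [← pat1001_mod (a k (m + 2) - 1 - c k (m + 1) - 1), hmod, pat1001_one]
        simp [pat1001]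
      · rintro n hn1 hn2 ⟨j, rfl⟩
        rw [Nat.mul_div_cancel_left j hkpos]
        rw [has] at hn1
        rw [hcs] at hn2
        have hj1 : a k (m + 1) + 2 < j := Nat.lt_of_mul_lt_mul_left hn1
        have hj2 : j < c k (m + 1) + 2 := Nat.lt_of_mul_lt_mul_left hn2
        have hoff : (k * j - a k (m + 2) - 1) % 4 = (j - a k (m + 1) - 3) % 4 := by
          rw [has]
          exact offset_mod k hk4 hk (a k (m + 1)) j (by omega)
        rcases Nat.lt_or_ge j (c k (m + 1)) with hjc | hjc
        · right
          rw [ihC j (by omega) hjc, has]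
          exact offset_flip k hk4 hk (a k (m + 1)) j (by omega)
        · rcases Nat.lt_or_ge j (c k (m + 1) + 1) with hj3 | hj3
          · left
            have hjj : j = c k (m + 1) := by omega
            rw [hjj]
            exact ihD
          · right
            have hjj : j = c k (m + 1) + 1 := by omega
            subst hjj
            rw [hA (c k (m + 1) + 1) (by omega) (by omega),
              show c k (m + 1) + 1 - c k (m + 1) - 1 = 0 by omega,
              ← pat1001_mod (k * (c k (m + 1) + 1) - a k (m + 2) - 1), hoff]
            have hmod : (c k (m + 1) + 1 - a k (m + 1) - 3) % 4 = 1 := by omega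
            rw [hmod]
            simp [pat1001]
    have hD : sg k hk (c k (m + 2)) = 2 := by
      have hdvd : k ∣ c k (m + 2) := ⟨c k (m + 1) + 2, hcs⟩
      rw [sg_rec_d k hk (c k (m + 2)) (by have := c_ge k hk5 (m + 2); omega) hdvd,
        show c k (m + 2) / k = c k (m + 1) + 2 by
          rw [hcs, Nat.mul_div_cancel_left _ hkpos],
        hA (c k (m + 1) + 2) (by omega) (by omega),
        show c k (m + 1) + 2 - c k (m + 1) - 1 = 1 by omega, pat1001_one,
        hC (c k (m + 2) - 2) (by omega) (by omega)]
      have hmod : (c k (m + 2) - 2 - a k (m + 2) - 1) % 4 = 0 := by omega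
      rw [← pat1001_mod (c k (m + 2) - 2 - a k (m + 2) - 1), hmod]
      simp only [pat1001]
      norm_num
      exact mex_10
    exact ⟨hA, hB, hC, hD⟩


theorem sg_Am (k : ℕ) (hk : k % 4 = 1) (hk1 : 1 < k) (m : ℕ) (hm : 1 ≤ m) (n : ℕ)
    (h1 : c k (m - 1) < n) (h2 : n < a k m) (r : ℕ) (hr : r = (n - c k (m - 1) - 1) % 4) :
    (r = 0 ∨ r = 3 → sg k (by omega) n = 1) ∧
    (r = 1 ∨ r = 2 → sg k (by omega) n = 0) := by
  have hk5 : 5 ≤ k := by omega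
  have hk2 : 2 ≤ k := by omega
  obtain ⟨m', rfl⟩ : ∃ m', m = m' + 1 := ⟨m - 1, by omega⟩
  have hm1 : m' + 1 - 1 = m' := by omega
  rw [hm1] at h1 hr
  have hA := (main_ind k hk2 hk hk5 m').1 n h1 h2
  have : sg k (by omega : 2 ≤ k) n = pat1001 r := by
    rw [hA, ← pat1001_mod (n - c k m' - 1), ← hr]
  rw [this]
  have hr4 : r < 4 := by omega
  constructor
  · rintro (rfl | rfl) <;> simp [pat1001]
  · rintro (rfl | rfl) <;> simp [pat1001]
end
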